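/- arXiv:0909.1273 — 3 statements merged into one kernel-verified Lean document; each statement's English description precedes it below -/
import Mathlib

section
/- For every n ≥ 1, a rational number ξ ∈ (0,1) belongs to Q_n (the set of mediants newly inserted at step n of the Stern–Brocot construction) if and only if S(ξ) = n+1, where S(ξ) is the sum of the partial quotients in the regular continued fraction expansion ξ = [0; a_1, …, a_m] with a_m ≥ 2. -/
open Set Filter

/-- The mediant of two rationals (written in lowest terms). -/
def mediant (x y : ℚ) : ℚ :=
  ((x.num + y.num : ℤ) : ℚ) / ((x.den + y.den : ℕ) : ℚ)

/-- `x` and `y` are consecutive elements of the set `S`. -/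
def IsConsecutive (S : Set ℚ) (x y : ℚ) : Prop :=
  x ∈ S ∧ y ∈ S ∧ x < y ∧ ∀ z ∈ S, ¬ (x < z ∧ z < y)

/-- The Stern–Brocot sequences `ℱ_n`. -/
def sternBrocot : ℕ → Set ℚ
  | 0 => {0, 1}
  | n + 1 => sternBrocot n ∪
      {z | ∃ x y : ℚ, IsConsecutive (sternBrocot n) x y ∧ z = mediant x y}

/-- `Q_n`, the set of mediants newly inserted at step `n ≥ 1` of the
Stern–Brocot construction. -/
def newMediants (n : ℕ) : Set ℚ :=
  {z | ∃ x y : ℚ, IsConsecutive (sternBrocot (n - 1)) x y ∧ z = mediant x y}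

/-- Value of the regular continued fraction `[0; a_1, …, a_m]`. -/
def cfVal : List ℕ → ℚ
  | [] => 0
  | a :: t => 1 / ((a : ℚ) + cfVal t)

/-- `a` is the regular continued fraction expansion `[0; a_1, …, a_m]` of `x`,
with all partial quotients positive and the last one at least `2`. -/
def IsCF (x : ℚ) (a : List ℕ) : Prop :=
  (∀ ai ∈ a, 1 ≤ ai) ∧ 2 ≤ a.getLastD 0 ∧ x = cfVal a

/-- Value of `b_1 - 1/(b_2 - ⋯ - 1/b_l)` (using the convention `1/0 = 0`,
so that `rrTail [b] = b`). -/
def rrTail : List ℕ → ℚ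
  | [] => 0
  | b :: t => (b : ℚ) - 1 / rrTail t

/-- Value of the regular reduced continued fraction
`[[1; b_1, …, b_l]] = 1 - 1/(b_1 - 1/(b_2 - ⋯ - 1/b_l))`. -/
def rrcfVal (b : List ℕ) : ℚ := 1 - 1 / rrTail b

/-- `b` is the regular reduced continued fraction expansion
`[[1; b_1, …, b_l]]` of `x`, with all entries at least `2`. -/
def IsRRCF (x : ℚ) (b : List ℕ) : Prop :=
  (∀ bi ∈ b, 2 ≤ bi) ∧ x = rrcfVal b

/-- `Θ_k`: rationals in `(0,1)` whose regular reduced continued fraction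
expansion satisfies `L(x) = b_1 + ⋯ + b_l = k + 1`. -/
def Theta (k : ℕ) : Set ℚ :=
  {x | x ∈ Set.Ioo (0 : ℚ) 1 ∧ ∃ b : List ℕ, IsRRCF x b ∧ b.sum = k + 1}

/-- `Ξ_n = {0, 1} ∪ Θ_1 ∪ ⋯ ∪ Θ_n`. -/
def Xi (n : ℕ) : Set ℚ :=
  {0, 1} ∪ ⋃ k ∈ Finset.Icc 1 n, Theta k

/-!
Write a rational in `(0,1)` as `[0; l, k + 2]`. Its Stern–Brocot parents, the two fractions of
which it is the mediant, are `[0; l]` and `[0; l, k + 1]`: the numerator–denominator pairs add up,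
because prepending a partial quotient acts linearly on them, `(p, q) ↦ (q, x q + p)`, and all
these pairs are coprime. Inserting the mediant creates the consecutive pairs
`([0; l], [0; l, k + 2])` and `([0; l, k + 1], [0; l, k + 1, 1])`, the parents of `[0; l, k + 3]`
and `[0; l, k + 1, 2]`; both raise the sum of the partial quotients by one. By induction the
consecutive pairs of `ℱ_n` are exactly the parent pairs of the expansions with sum `n + 2`, so
`Q_{n+1}` consists of these expansions, and uniqueness of the expansion concludes.
-/

def cfStep (x : ℕ) (v : ℤ × ℤ) : ℤ × ℤ := (v.2, x * v.2 + v.1)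

def cfNumDen (a : List ℕ) : ℤ × ℤ := a.foldr cfStep (0, 1)

theorem cfNumDen_cons (x : ℕ) (l : List ℕ) : cfNumDen (x :: l) = cfStep x (cfNumDen l) := rfl

theorem cfStep_add (x : ℕ) (v w : ℤ × ℤ) : cfStep x (v + w) = cfStep x v + cfStep x w := by
  ext <;> simp only [cfStep, Prod.fst_add, Prod.snd_add]
  ring

theorem foldr_cfStep_add (l : List ℕ) (v w : ℤ × ℤ) :
    l.foldr cfStep (v + w) = l.foldr cfStep v + l.foldr cfStep w := by
  induction l with
  | nil => rfl
  | cons x l ih => simp only [List.foldr_cons, ih, cfStep_add]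

theorem cfNumDen_append_succ (l : List ℕ) (k : ℕ) :
    cfNumDen (l ++ [k + 1]) = cfNumDen l + cfNumDen (l ++ [k]) := by
  have hlast : cfStep (k + 1) (0, 1) = (0, 1) + cfStep k (0, 1) := by
    ext <;> simp [cfStep, add_comm]
  simp only [cfNumDen, List.foldr_append, List.foldr_cons, List.foldr_nil, hlast,
    foldr_cfStep_add]

theorem isCoprime_cfNumDen (l : List ℕ) : IsCoprime (cfNumDen l).1 (cfNumDen l).2 := by
  induction l with
  | nil => exact isCoprime_one_right
  | cons x l ih =>
    simpa only [cfNumDen_cons, cfStep, add_comm, mul_comm] using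
      ih.symm.add_mul_left_right (x : ℤ)

theorem cfNumDen_nonneg_and_pos {l : List ℕ} (hl : ∀ i ∈ l, 1 ≤ i) :
    0 ≤ (cfNumDen l).1 ∧ 0 < (cfNumDen l).2 := by
  induction l with
  | nil => simp [cfNumDen]
  | cons x l ih =>
    obtain ⟨hp, hq⟩ := ih (List.forall_mem_cons.mp hl).2
    have hx : (1 : ℤ) ≤ x := by exact_mod_cast hl x List.mem_cons_self
    exact ⟨hq.le, by simp only [cfNumDen_cons, cfStep]; nlinarith⟩

theorem cfVal_eq_div {l : List ℕ} (hl : ∀ i ∈ l, 1 ≤ i) :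
    cfVal l = (cfNumDen l).1 / (cfNumDen l).2 := by
  induction l with
  | nil => simp [cfVal, cfNumDen]
  | cons x l ih =>
    have hl' := (List.forall_mem_cons.mp hl).2
    have hq : (0 : ℚ) < (cfNumDen l).2 := by exact_mod_cast (cfNumDen_nonneg_and_pos hl').2
    simp only [cfVal, ih hl', cfNumDen_cons, cfStep]
    field_simp
    push_cast
    ring

theorem mediant_intCast_div {p q r s : ℤ} (hq : 0 < q) (hs : 0 < s) (hpq : IsCoprime p q)
    (hrs : IsCoprime r s) : mediant (p / q) (r / s) = ((p + r : ℤ) : ℚ) / ((q + s : ℤ) : ℚ) := by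
  rw [Int.isCoprime_iff_nat_coprime] at hpq hrs
  have hden : (((p / q : ℚ).den + (r / s : ℚ).den : ℕ) : ℤ) = q + s := by
    push_cast
    rw [Rat.den_div_eq_of_coprime hq hpq, Rat.den_div_eq_of_coprime hs hrs]
  rw [mediant, Rat.num_div_eq_of_coprime hq hpq, Rat.num_div_eq_of_coprime hs hrs, ← hden,
    Int.cast_natCast]

theorem mediant_comm (x y : ℚ) : mediant x y = mediant y x := by
  simp only [mediant, add_comm]

theorem mediant_mem_Ioo {x y : ℚ} (h : x < y) : mediant x y ∈ Ioo x y := by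
  have hx : (0 : ℚ) < x.den := by exact_mod_cast x.pos
  have hy : (0 : ℚ) < y.den := by exact_mod_cast y.pos
  rw [← Rat.num_div_den x, ← Rat.num_div_den y, div_lt_div_iff₀ hx hy] at h
  rw [mediant]
  push_cast
  constructor
  · conv_lhs => rw [← Rat.num_div_den x]
    rw [div_lt_div_iff₀ hx (by positivity)]
    linarith
  · conv_rhs => rw [← Rat.num_div_den y]
    rw [div_lt_div_iff₀ (by positivity) hy]
    linarith

theorem mediant_cfVal_append {l : List ℕ} (hl : ∀ i ∈ l, 1 ≤ i) (k : ℕ) :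
    mediant (cfVal l) (cfVal (l ++ [k + 1])) = cfVal (l ++ [k + 2]) := by
  have hpos (j : ℕ) : ∀ i ∈ l ++ [j + 1], 1 ≤ i :=
    List.forall_mem_append.mpr ⟨hl, by simp⟩
  obtain ⟨-, hq⟩ := cfNumDen_nonneg_and_pos hl
  obtain ⟨-, hs⟩ := cfNumDen_nonneg_and_pos (hpos k)
  rw [cfVal_eq_div hl, cfVal_eq_div (hpos k), cfVal_eq_div (hpos (k + 1)),
    mediant_intCast_div hq hs (isCoprime_cfNumDen _) (isCoprime_cfNumDen _),
    cfNumDen_append_succ l (k + 1)]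
  rfl

theorem cfVal_append_congr (l : List ℕ) {r r' : List ℕ} (h : cfVal r = cfVal r') :
    cfVal (l ++ r) = cfVal (l ++ r') := by
  induction l with
  | nil => exact h
  | cons x l ih => simp only [List.cons_append, cfVal, ih]

theorem cfVal_append_pair_one (l : List ℕ) (j : ℕ) :
    cfVal (l ++ [j, 1]) = cfVal (l ++ [j + 1]) :=
  cfVal_append_congr l (by norm_num [cfVal])

theorem cfVal_append_mem_Ioo {l : List ℕ} (hl : ∀ i ∈ l, 1 ≤ i) (k : ℕ) :
    cfVal (l ++ [k + 2]) ∈ Ioo 0 1 := by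
  induction l with
  | nil =>
    simp only [List.nil_append, cfVal, add_zero, mem_Ioo]
    constructor
    · positivity
    · rw [div_lt_one (by positivity)]
      exact_mod_cast (by omega : 1 < k + 2)
  | cons x l ih =>
    obtain ⟨h0, -⟩ := ih (List.forall_mem_cons.mp hl).2
    have hx : (1 : ℚ) ≤ x := by exact_mod_cast hl x List.mem_cons_self
    simp only [List.cons_append, cfVal, mem_Ioo]
    constructor
    · positivity
    · rw [div_lt_one (by positivity)]
      linarith

theorem cfVal_cons_eq_cfVal_cons_iff {x y : ℕ} {s t : List ℕ} :
    cfVal (x :: s) = cfVal (y :: t) ↔ (x : ℚ) + cfVal s = y + cfVal t := by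
  simp only [cfVal, one_div, inv_inj]

theorem natCast_add_inj {x y : ℕ} {c d : ℚ} (hc : c ∈ Ico 0 1) (hd : d ∈ Ico 0 1)
    (h : (x : ℚ) + c = y + d) : x = y ∧ c = d := by
  have hxy : x < y + 1 := by exact_mod_cast (by linarith [hc.1, hd.2] : (x : ℚ) < y + 1)
  have hyx : y < x + 1 := by exact_mod_cast (by linarith [hc.2, hd.1] : (y : ℚ) < x + 1)
  obtain rfl : x = y := by omega
  exact ⟨rfl, by linarith⟩

theorem eq_of_cfVal_append_eq {l₁ l₂ : List ℕ} {k₁ k₂ : ℕ} (h₁ : ∀ i ∈ l₁, 1 ≤ i)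
    (h₂ : ∀ i ∈ l₂, 1 ≤ i) (h : cfVal (l₁ ++ [k₁ + 2]) = cfVal (l₂ ++ [k₂ + 2])) :
    l₁ = l₂ ∧ k₁ = k₂ := by
  have hnil : cfVal [] ∈ Ico 0 1 := by simp [cfVal]
  have htail {l : List ℕ} (hl : ∀ i ∈ l, 1 ≤ i) (k : ℕ) : cfVal (l ++ [k + 2]) ∈ Ico 0 1 :=
    Ioo_subset_Ico_self (cfVal_append_mem_Ioo hl k)
  induction l₁ generalizing l₂ with
  | nil =>
    cases l₂ with
    | nil =>
      have := (natCast_add_inj hnil hnil (cfVal_cons_eq_cfVal_cons_iff.mp h)).1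
      exact ⟨rfl, by omega⟩
    | cons y l₂ =>
      have hl₂ := (List.forall_mem_cons.mp h₂).2
      have h0 := (natCast_add_inj hnil (htail hl₂ _) (cfVal_cons_eq_cfVal_cons_iff.mp h)).2
      exact absurd h0 (cfVal_append_mem_Ioo hl₂ _).1.ne
  | cons x l₁ ih =>
    have hl₁ := (List.forall_mem_cons.mp h₁).2
    cases l₂ with
    | nil =>
      have h0 := (natCast_add_inj (htail hl₁ _) hnil (cfVal_cons_eq_cfVal_cons_iff.mp h)).2
      exact absurd h0 (cfVal_append_mem_Ioo hl₁ _).1.ne'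
    | cons y l₂ =>
      have hl₂ := (List.forall_mem_cons.mp h₂).2
      obtain ⟨rfl, htl⟩ := natCast_add_inj (htail hl₁ _) (htail hl₂ _)
        (cfVal_cons_eq_cfVal_cons_iff.mp h)
      obtain ⟨rfl, rfl⟩ := ih hl₁ hl₂ htl
      exact ⟨rfl, rfl⟩

theorem IsCF.exists_eq_append {ξ : ℚ} {a : List ℕ} (h : IsCF ξ a) :
    ∃ l k, (∀ i ∈ l, 1 ≤ i) ∧ a = l ++ [k + 2] := by
  obtain ⟨hpos, hlast, -⟩ := h
  rcases a.eq_nil_or_concat' with rfl | ⟨l, b, rfl⟩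
  · simp at hlast
  · rw [List.getLastD_concat] at hlast
    exact ⟨l, b - 2, (List.forall_mem_append.mp hpos).1, by rw [Nat.sub_add_cancel hlast]⟩

theorem IsConsecutive.eq_of_mem_Ioo {S : Set ℚ} {u v u' v' z : ℚ} (h : IsConsecutive S u v)
    (h' : IsConsecutive S u' v') (hz : z ∈ Ioo u v) (hz' : z ∈ Ioo u' v') : u = u' ∧ v = v' := by
  obtain ⟨hu, hv, -, hgap⟩ := h
  obtain ⟨hu', hv', -, hgap'⟩ := h'
  constructor
  · exact le_antisymm (not_lt.mp fun hlt => hgap' u hu ⟨hlt, hz.1.trans hz'.2⟩)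
      (not_lt.mp fun hlt => hgap u' hu' ⟨hlt, hz'.1.trans hz.2⟩)
  · exact le_antisymm (not_lt.mp fun hlt => hgap v' hv' ⟨hz.1.trans hz'.2, hlt⟩)
      (not_lt.mp fun hlt => hgap' v hv ⟨hz'.1.trans hz.2, hlt⟩)

def insertBetween (f : ℚ → ℚ → ℚ) (S : Set ℚ) : Set ℚ :=
  S ∪ {z | ∃ x y, IsConsecutive S x y ∧ z = f x y}

section insertBetween

variable {f : ℚ → ℚ → ℚ} {S : Set ℚ}

theorem IsConsecutive.mem_insertBetween_left {u v : ℚ} (h : IsConsecutive S u v) :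
    u ∈ insertBetween f S :=
  Or.inl h.1

theorem IsConsecutive.mem_insertBetween_right {u v : ℚ} (h : IsConsecutive S u v) :
    v ∈ insertBetween f S :=
  Or.inl h.2.1

theorem IsConsecutive.apply_mem_insertBetween {u v : ℚ} (h : IsConsecutive S u v) :
    f u v ∈ insertBetween f S :=
  Or.inr ⟨u, v, h, rfl⟩

theorem IsConsecutive.eq_of_mem_insertBetween (hf : ∀ x y, x < y → f x y ∈ Ioo x y) {u v z : ℚ}
    (huv : IsConsecutive S u v) (hz : z ∈ insertBetween f S) (hzuv : z ∈ Ioo u v) :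
    z = f u v := by
  rcases hz with hz | ⟨x, y, hxy, rfl⟩
  · exact absurd hzuv (huv.2.2.2 z hz)
  · obtain ⟨rfl, rfl⟩ := huv.eq_of_mem_Ioo hxy hzuv (hf x y hxy.2.2.1)
    rfl

theorem isConsecutive_insertBetween_iff (hf : ∀ x y, x < y → f x y ∈ Ioo x y) {x y : ℚ} :
    IsConsecutive (insertBetween f S) x y ↔
      ∃ u v, IsConsecutive S u v ∧ (x = u ∧ y = f u v ∨ x = f u v ∧ y = v) := by
  constructor
  · rintro ⟨hx, hy, hxy, hgap⟩
    rcases hy with hy | ⟨u, v, huv, rfl⟩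
    · rcases hx with hx | ⟨u, v, huv, rfl⟩
      · have hcons : IsConsecutive S x y := ⟨hx, hy, hxy, fun z hz => hgap z (Or.inl hz)⟩
        exact absurd (hf x y hxy) (hgap _ hcons.apply_mem_insertBetween)
      · have hfuv := hf u v huv.2.2.1
        refine ⟨u, v, huv, Or.inr ⟨rfl, le_antisymm ?_ ?_⟩⟩
        · exact not_lt.mp fun hlt => hgap v huv.mem_insertBetween_right ⟨hfuv.2, hlt⟩
        · exact not_lt.mp fun hlt => huv.2.2.2 y hy ⟨hfuv.1.trans hxy, hlt⟩
    · have hfuv := hf u v huv.2.2.1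
      refine ⟨u, v, huv, Or.inl ⟨le_antisymm ?_ ?_, rfl⟩⟩
      · exact not_lt.mp fun hlt =>
          hxy.ne (huv.eq_of_mem_insertBetween hf hx ⟨hlt, hxy.trans hfuv.2⟩)
      · exact not_lt.mp fun hlt => hgap u huv.mem_insertBetween_left ⟨hlt, hfuv.1⟩
  · rintro ⟨u, v, huv, ⟨rfl, rfl⟩ | ⟨rfl, rfl⟩⟩
    · have hfuv := hf _ _ huv.2.2.1
      refine ⟨huv.mem_insertBetween_left, huv.apply_mem_insertBetween, hfuv.1, ?_⟩
      rintro z hz ⟨hzu, hzf⟩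
      exact hzf.ne (huv.eq_of_mem_insertBetween hf hz ⟨hzu, hzf.trans hfuv.2⟩)
    · have hfuv := hf _ _ huv.2.2.1
      refine ⟨huv.apply_mem_insertBetween, huv.mem_insertBetween_right, hfuv.2, ?_⟩
      rintro z hz ⟨hfz, hzv⟩
      exact hfz.ne' (huv.eq_of_mem_insertBetween hf hz ⟨hfuv.1.trans hfz, hzv⟩)

end insertBetween

theorem sternBrocot_succ (n : ℕ) :
    sternBrocot (n + 1) = insertBetween mediant (sternBrocot n) :=
  rfl

theorem isConsecutive_sternBrocot_zero_iff {x y : ℚ} :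
    IsConsecutive (sternBrocot 0) x y ↔ x = 0 ∧ y = 1 := by
  constructor
  · rintro ⟨hx | hx, hy | hy, hxy, -⟩ <;> subst hx hy <;> first | exact ⟨rfl, rfl⟩ | norm_num at hxy
  · rintro ⟨rfl, rfl⟩
    refine ⟨Or.inl rfl, Or.inr rfl, zero_lt_one, ?_⟩
    rintro z (rfl | rfl) ⟨h0, h1⟩ <;> linarith

theorem isConsecutive_sternBrocot_succ_iff {n : ℕ} {x y : ℚ} :
    IsConsecutive (sternBrocot (n + 1)) x y ↔ ∃ u v, IsConsecutive (sternBrocot n) u v ∧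
      (x = u ∧ y = mediant u v ∨ x = mediant u v ∧ y = v) := by
  rw [sternBrocot_succ, isConsecutive_insertBetween_iff fun _ _ => mediant_mem_Ioo]

/-- `u = [0; l]` and `v = [0; l, k + 1]` are the two Stern–Brocot parents of `[0; l, k + 2]`,
whose partial quotients sum to `n + 2`. -/
def IsParentPair (n : ℕ) (u v : ℚ) : Prop :=
  ∃ l k, (∀ i ∈ l, 1 ≤ i) ∧ l.sum + k = n ∧ u = cfVal l ∧ v = cfVal (l ++ [k + 1])

namespace IsParentPair

variable {n : ℕ} {u v : ℚ}

theorem mediant_left (h : IsParentPair n u v) : IsParentPair (n + 1) u (mediant u v) := by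
  obtain ⟨l, k, hl, hs, rfl, rfl⟩ := h
  exact ⟨l, k + 1, hl, by omega, rfl, mediant_cfVal_append hl k⟩

theorem mediant_right (h : IsParentPair n u v) : IsParentPair (n + 1) v (mediant u v) := by
  obtain ⟨l, k, hl, hs, rfl, rfl⟩ := h
  refine ⟨l ++ [k + 1], 0, List.forall_mem_append.mpr ⟨hl, by simp⟩, by simp; omega, rfl, ?_⟩
  rw [mediant_cfVal_append hl k, List.append_assoc]
  exact (cfVal_append_pair_one l (k + 1)).symm

theorem exists_of_succ (h : IsParentPair (n + 1) u v) :
    ∃ u' v', IsParentPair n u' v' ∧ (u = u' ∨ u = v') ∧ v = mediant u' v' := by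
  obtain ⟨l, k, hl, hs, rfl, rfl⟩ := h
  cases k with
  | succ k =>
    exact ⟨_, _, ⟨l, k, hl, by omega, rfl, rfl⟩, Or.inl rfl, (mediant_cfVal_append hl k).symm⟩
  | zero =>
    rcases l.eq_nil_or_concat' with rfl | ⟨l, b, rfl⟩
    · simp at hs
    · obtain ⟨hl', hb⟩ := List.forall_mem_append.mp hl
      obtain ⟨k, rfl⟩ : ∃ k, b = k + 1 := ⟨b - 1, by simp at hb; omega⟩
      refine ⟨_, _, ⟨l, k, hl', by simp at hs; omega, rfl, rfl⟩, Or.inr rfl, ?_⟩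
      rw [mediant_cfVal_append hl' k, List.append_assoc]
      exact cfVal_append_pair_one l (k + 1)

end IsParentPair

theorem IsConsecutive.isParentPair_sternBrocot {n : ℕ} {x y : ℚ}
    (h : IsConsecutive (sternBrocot n) x y) : IsParentPair n x y ∨ IsParentPair n y x := by
  induction n generalizing x y with
  | zero =>
    obtain ⟨rfl, rfl⟩ := isConsecutive_sternBrocot_zero_iff.mp h
    exact .inl ⟨[], 0, by simp, rfl, rfl, by norm_num [cfVal]⟩
  | succ n ih =>
    obtain ⟨u, v, huv, ⟨rfl, rfl⟩ | ⟨rfl, rfl⟩⟩ := isConsecutive_sternBrocot_succ_iff.mp h <;>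
      rcases ih huv with h' | h'
    · exact .inl h'.mediant_left
    · exact .inl (by rw [mediant_comm]; exact h'.mediant_right)
    · exact .inr h'.mediant_right
    · exact .inr (by rw [mediant_comm]; exact h'.mediant_left)

theorem IsParentPair.isConsecutive_sternBrocot {n : ℕ} {u v : ℚ} (h : IsParentPair n u v) :
    IsConsecutive (sternBrocot n) u v ∨ IsConsecutive (sternBrocot n) v u := by
  induction n generalizing u v with
  | zero =>
    obtain ⟨l, k, hl, hs, rfl, rfl⟩ := h
    obtain ⟨rfl, rfl⟩ : l = [] ∧ k = 0 := by
      cases l with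
      | nil => exact ⟨rfl, by simpa using hs⟩
      | cons x l => have := hl x List.mem_cons_self; simp at hs; omega
    exact .inl (isConsecutive_sternBrocot_zero_iff.mpr ⟨rfl, by norm_num [cfVal]⟩)
  | succ n ih =>
    obtain ⟨u', v', h', hu | hu, rfl⟩ := h.exists_of_succ <;> subst hu <;>
      rcases ih h' with hc | hc
    · exact .inl (isConsecutive_sternBrocot_succ_iff.mpr ⟨_, _, hc, .inl ⟨rfl, rfl⟩⟩)
    · exact .inr (isConsecutive_sternBrocot_succ_iff.mpr ⟨_, _, hc, .inr ⟨mediant_comm _ _, rfl⟩⟩)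
    · exact .inr (isConsecutive_sternBrocot_succ_iff.mpr ⟨_, _, hc, .inr ⟨rfl, rfl⟩⟩)
    · exact .inl (isConsecutive_sternBrocot_succ_iff.mpr ⟨_, _, hc, .inl ⟨rfl, mediant_comm _ _⟩⟩)

theorem mem_newMediants_succ_iff {n : ℕ} {z : ℚ} :
    z ∈ newMediants (n + 1) ↔
      ∃ l k, (∀ i ∈ l, 1 ≤ i) ∧ l.sum + k = n ∧ z = cfVal (l ++ [k + 2]) := by
  rw [newMediants, Nat.add_sub_cancel]
  constructor
  · rintro ⟨x, y, hxy, rfl⟩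
    rcases hxy.isParentPair_sternBrocot with ⟨l, k, hl, hs, rfl, rfl⟩ | ⟨l, k, hl, hs, rfl, rfl⟩
    · exact ⟨l, k, hl, hs, mediant_cfVal_append hl k⟩
    · exact ⟨l, k, hl, hs, by rw [mediant_comm, mediant_cfVal_append hl k]⟩
  · rintro ⟨l, k, hl, hs, rfl⟩
    have hP : IsParentPair n (cfVal l) (cfVal (l ++ [k + 1])) := ⟨l, k, hl, hs, rfl, rfl⟩
    rcases hP.isConsecutive_sternBrocot with h | h
    · exact ⟨_, _, h, (mediant_cfVal_append hl k).symm⟩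
    · exact ⟨_, _, h, by rw [mediant_comm, mediant_cfVal_append hl k]⟩

theorem mem_newMediants_iff_sum_partial_quotients_general
    (n : ℕ) (hn : 1 ≤ n) (ξ : ℚ)
    (a : List ℕ) (ha : IsCF ξ a) :
    ξ ∈ newMediants n ↔ a.sum = n + 1 := by
  obtain ⟨m, rfl⟩ : ∃ m, n = m + 1 := ⟨n - 1, by omega⟩
  obtain ⟨l, k, hl, rfl⟩ := ha.exists_eq_append
  rw [mem_newMediants_succ_iff, ha.2.2, List.sum_append, List.sum_singleton]
  constructor
  · rintro ⟨l', k', hl', hs, heq⟩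
    obtain ⟨rfl, rfl⟩ := eq_of_cfVal_append_eq hl hl' heq
    omega
  · intro hs
    exact ⟨l, k, hl, by omega, rfl⟩

/-- a rational `ξ ∈ (0,1)` belongs to `Q_n` (`n ≥ 1`) iff the sum
of its partial quotients equals `n + 1`. -/
theorem mem_newMediants_iff_sum_partial_quotients
    (n : ℕ) (hn : 1 ≤ n) (ξ : ℚ) (hξ : ξ ∈ Set.Ioo (0 : ℚ) 1)
    (a : List ℕ) (ha : IsCF ξ a) :
    ξ ∈ newMediants n ↔ a.sum = n + 1 :=
  mem_newMediants_iff_sum_partial_quotients_general n hn ξ a ha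
end

section
/- For every n ≥ 1, the set Θ_n is finite and #Θ_n = F_n, the n-th Fibonacci number; in particular #Θ_1 = 1, #Θ_2 = 1, and #Θ_{n+1} = #Θ_n + #Θ_{n−1} for n ≥ 2. -/
open Set Filter

/-!
Reading off the entries `b` identifies `Θ_k` with the compositions of `k + 1` into parts `≥ 2`:
the tail `1/(b_2 - ⋯)` lies in `[0, 1)`, so `b_1` is the ceiling of `b_1 - 1/(b_2 - ⋯)` and the
expansion is recovered from its value. Such a composition either starts with `2`, followed by a
composition of `k - 1`, or starts with some `b_1 ≥ 3`, and lowering `b_1` by one gives a composition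
of `k`. Hence the counts satisfy the Fibonacci recursion.
-/

open Set List

theorem List.modifyHead_injective {α : Type*} {f : α → α} (hf : Function.Injective f) :
    Function.Injective (modifyHead f) := by
  rintro (_ | ⟨a, s⟩) (_ | ⟨b, t⟩) h <;> simp_all [hf.eq_iff]

theorem inv_rrTail_mem_Ico : ∀ {b : List ℕ}, (∀ i ∈ b, 2 ≤ i) → (rrTail b)⁻¹ ∈ Set.Ico 0 1
  | [], _ => by simp [rrTail]
  | a :: t, h => by
    obtain ⟨-, ht⟩ := inv_rrTail_mem_Ico fun i hi => h i (mem_cons_of_mem a hi)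
    have ha : (2 : ℚ) ≤ a := by exact_mod_cast h a mem_cons_self
    have : 1 < rrTail (a :: t) := by rw [rrTail, one_div]; linarith
    exact ⟨by positivity, inv_lt_one_of_one_lt₀ this⟩

theorem rrTail_cons_mem_Ioc (a : ℕ) {t : List ℕ} (ht : ∀ i ∈ t, 2 ≤ i) :
    rrTail (a :: t) ∈ Ioc ((a : ℚ) - 1) a := by
  obtain ⟨h0, h1⟩ := inv_rrTail_mem_Ico ht
  rw [rrTail, one_div]
  constructor <;> linarith

theorem ceil_rrTail_cons (a : ℕ) {t : List ℕ} (ht : ∀ i ∈ t, 2 ≤ i) :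
    ⌈rrTail (a :: t)⌉ = a :=
  Int.ceil_eq_iff.2 (by exact_mod_cast rrTail_cons_mem_Ioc a ht)

theorem one_lt_rrTail_of_ne_nil {b : List ℕ} (hb : b ≠ []) (h : ∀ i ∈ b, 2 ≤ i) :
    1 < rrTail b := by
  obtain ⟨a, t, rfl⟩ := ne_nil_iff_exists_cons.1 hb
  have ha : (2 : ℚ) ≤ a := by exact_mod_cast h a mem_cons_self
  linarith [(rrTail_cons_mem_Ioc a fun i hi => h i (mem_cons_of_mem a hi)).1]

theorem rrTail_injOn : InjOn rrTail {b | ∀ i ∈ b, 2 ≤ i} := by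
  intro b hb b' hb' he
  induction b generalizing b' with
  | nil =>
    by_contra hne
    linarith [one_lt_rrTail_of_ne_nil (Ne.symm hne) hb', show rrTail [] = 0 from rfl]
  | cons a t ih =>
    have ht : ∀ i ∈ t, 2 ≤ i := fun i hi => hb i (mem_cons_of_mem a hi)
    obtain _ | ⟨a', t'⟩ := b'
    · linarith [one_lt_rrTail_of_ne_nil (cons_ne_nil a t) hb, show rrTail [] = 0 from rfl]
    have ht' : ∀ i ∈ t', 2 ≤ i := fun i hi => hb' i (mem_cons_of_mem a' hi)
    have haa' : a = a' := by
      have := congrArg Int.ceil he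
      rwa [ceil_rrTail_cons a ht, ceil_rrTail_cons a' ht', Nat.cast_inj] at this
    subst haa'
    have htt' : rrTail t = rrTail t' := by
      rw [rrTail, rrTail] at he
      exact inv_inj.1 (by simpa using he)
    rw [ih ht ht' htt']

theorem rrcfVal_injOn : InjOn rrcfVal {b | ∀ i ∈ b, 2 ≤ i} := by
  intro b hb b' hb' he
  refine rrTail_injOn hb hb' (inv_inj.1 ?_)
  simpa [rrcfVal] using he

theorem rrcfVal_mem_Ioo {b : List ℕ} (hb : b ≠ []) (h : ∀ i ∈ b, 2 ≤ i) :
    rrcfVal b ∈ Ioo 0 1 := by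
  have h1 := one_lt_rrTail_of_ne_nil hb h
  have h2 : (rrTail b)⁻¹ < 1 := inv_lt_one_of_one_lt₀ h1
  have h3 : 0 < (rrTail b)⁻¹ := by positivity
  rw [rrcfVal, one_div]
  constructor <;> linarith

def compositionsGeTwo (m : ℕ) : Set (List ℕ) :=
  {b | (∀ i ∈ b, 2 ≤ i) ∧ b.sum = m}

theorem compositionsGeTwo_zero : compositionsGeTwo 0 = {[]} := by
  ext b
  simp only [compositionsGeTwo, sum_eq_zero_iff, mem_ofPred_eq, mem_singleton_iff]
  refine ⟨fun ⟨h2, h0⟩ => eq_nil_iff_forall_not_mem.2 fun i hi => ?_, by rintro rfl; simp⟩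
  have := h2 i hi
  have := h0 i hi
  omega

theorem compositionsGeTwo_one : compositionsGeTwo 1 = ∅ := by
  refine eq_empty_of_forall_notMem fun b ⟨h2, hs⟩ => ?_
  obtain _ | ⟨a, t⟩ := b
  · simp at hs
  · have := h2 a mem_cons_self
    have := le_sum_of_mem (mem_cons_self (a := a) (l := t))
    omega

theorem compositionsGeTwo_add_two (m : ℕ) :
    compositionsGeTwo (m + 2) =
      cons 2 '' compositionsGeTwo m ∪ modifyHead (· + 1) '' compositionsGeTwo (m + 1) := by
  ext b
  simp only [compositionsGeTwo, mem_union, mem_image, mem_ofPred_eq]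
  constructor
  · rintro ⟨h2, hs⟩
    obtain _ | ⟨a, t⟩ := b
    · simp at hs
    have ha := h2 a mem_cons_self
    have ht : ∀ i ∈ t, 2 ≤ i := fun i hi => h2 i (mem_cons_of_mem a hi)
    rw [sum_cons] at hs
    obtain rfl | ha3 := ha.eq_or_lt
    · exact Or.inl ⟨t, ⟨ht, by omega⟩, rfl⟩
    · refine Or.inr ⟨(a - 1) :: t, ⟨forall_mem_cons.2 ⟨by omega, ht⟩, by rw [sum_cons]; omega⟩, ?_⟩
      rw [modifyHead_cons, Nat.sub_add_cancel (by omega : 1 ≤ a)]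
  · rintro (⟨t, ⟨ht, hs⟩, rfl⟩ | ⟨_ | ⟨a, t⟩, ⟨h2, hs⟩, rfl⟩)
    · exact ⟨forall_mem_cons.2 ⟨le_rfl, ht⟩, by rw [sum_cons, hs, add_comm]⟩
    · simp at hs
    · rw [forall_mem_cons] at h2
      rw [sum_cons] at hs
      refine ⟨?_, by rw [modifyHead_cons, sum_cons]; omega⟩
      rw [modifyHead_cons, forall_mem_cons]
      exact ⟨by omega, h2.2⟩

theorem disjoint_cons_two_modifyHead_succ (m : ℕ) :
    Disjoint (cons 2 '' compositionsGeTwo m)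
      (modifyHead (· + 1) '' compositionsGeTwo (m + 1)) := by
  rw [Set.disjoint_left]
  rintro _ ⟨t, -, rfl⟩ ⟨_ | ⟨a, s⟩, ⟨h2, hs⟩, he⟩
  · simp at hs
  · have := h2 a mem_cons_self
    rw [modifyHead_cons, cons.injEq] at he
    omega

theorem encard_compositionsGeTwo_add_two (m : ℕ) :
    (compositionsGeTwo (m + 2)).encard =
      (compositionsGeTwo m).encard + (compositionsGeTwo (m + 1)).encard := by
  rw [compositionsGeTwo_add_two, encard_union_eq (disjoint_cons_two_modifyHead_succ m),
    cons_injective.injOn.encard_image,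
    (modifyHead_injective (add_left_injective 1)).injOn.encard_image]

theorem encard_compositionsGeTwo_succ (m : ℕ) :
    (compositionsGeTwo (m + 1)).encard = Nat.fib m := by
  induction m using Nat.twoStepInduction with
  | zero => simp [compositionsGeTwo_one]
  | one => simp [encard_compositionsGeTwo_add_two 0, compositionsGeTwo_zero, compositionsGeTwo_one]
  | more n ih₀ ih₁ =>
    rw [encard_compositionsGeTwo_add_two, ih₀, ih₁, Nat.fib_add_two, Nat.cast_add]

theorem Theta_eq_image (k : ℕ) : Theta k = rrcfVal '' compositionsGeTwo (k + 1) := by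
  ext x
  constructor
  · rintro ⟨-, b, ⟨h2, rfl⟩, hs⟩
    exact ⟨b, ⟨h2, hs⟩, rfl⟩
  · rintro ⟨b, ⟨h2, hs⟩, rfl⟩
    have hb : b ≠ [] := by rintro rfl; simp at hs
    exact ⟨rrcfVal_mem_Ioo hb h2, b, ⟨h2, rfl⟩, hs⟩

theorem encard_Theta (k : ℕ) : (Theta k).encard = Nat.fib k := by
  rw [Theta_eq_image, (rrcfVal_injOn.mono fun _ hb => hb.1).encard_image,
    encard_compositionsGeTwo_succ]

theorem finite_Theta (k : ℕ) : (Theta k).Finite :=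
  finite_of_encard_eq_coe (encard_Theta k)

theorem ncard_Theta (k : ℕ) : (Theta k).ncard = Nat.fib k := by
  rw [ncard_def, encard_Theta, ENat.toNat_natCast]

/-- `Θ_n` is finite with `#Θ_n = F_n`; in particular
`#Θ_1 = #Θ_2 = 1` and `#Θ_{n+1} = #Θ_n + #Θ_{n-1}` for `n ≥ 2`. -/
theorem ncard_Theta_eq_fib :
    (∀ n : ℕ, 1 ≤ n → (Theta n).Finite ∧ (Theta n).ncard = Nat.fib n) ∧
      (Theta 1).ncard = 1 ∧ (Theta 2).ncard = 1 ∧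
      ∀ n : ℕ, 2 ≤ n →
        (Theta (n + 1)).ncard = (Theta n).ncard + (Theta (n - 1)).ncard := by
  refine ⟨fun n _ => ⟨finite_Theta n, ncard_Theta n⟩, ncard_Theta 1, ncard_Theta 2, fun n hn => ?_⟩
  obtain ⟨k, rfl⟩ : ∃ k, n = k + 1 := ⟨n - 1, by omega⟩
  rw [ncard_Theta, ncard_Theta, ncard_Theta, Nat.add_sub_cancel, Nat.fib_add_two, add_comm]
end

section
/- Let x < y < z be three consecutive elements of Ξ_n with y ∈ Θ_n, and let y^l = x ⊕ y and y^r = y ⊕ z denote the mediants of the corresponding pairs. Then y^l ∈ Θ_{n+2} and y^r ∈ Θ_{n+1}. -/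
open Set Filter

/-!
Write `y = [[1; b]]` with `b.sum = n + 1`, and let `G_b(v)` be the value of the expansion `b`
followed by a tail of value `v ∈ [0, 1]`, so that `[[1; b ++ c]] = G_b([[1; c]])` and
`y = G_b(1)`. Each `G_b` is increasing, and the rationals whose expansion starts with `b` are
exactly those in `(G_b(0), G_b(1)]`. Since `Ξ_n` consists of `0` and the values of expansions of
weight at most `n + 1`, the left neighbour of `y` is `x = G_b(0)` and, writing `b = b' ++ [a]`, the
right neighbour is `z = [[1; b']] = G_{b'}(1)`, while `y = G_{b'}(1 - 1/a)`.

`G_b` is a Möbius map whose matrix has nonnegative entries and determinant one, so it sends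
reduced fractions to reduced fractions and mediants to mediants. Hence
`x ⊕ y = G_b(1/2) = [[1; b, 2]]` and `y ⊕ z = G_{b'}(a/(a+1)) = [[1; b', a + 1]]`, of weights
`n + 3` and `n + 2`.
-/

lemma one_sub_one_div_lt_one_sub_one_div_iff {K : Type*} [Field K] [LinearOrder K]
    [IsStrictOrderedRing K] {a b : K} (ha : 0 < a) (hb : 0 < b) :
    1 - 1 / a < 1 - 1 / b ↔ a < b := by
  rw [sub_lt_sub_iff_left, one_div_lt_one_div hb ha]

lemma one_sub_one_div_le_one_sub_one_div_iff {K : Type*} [Field K] [LinearOrder K]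
    [IsStrictOrderedRing K] {a b : K} (ha : 0 < a) (hb : 0 < b) :
    1 - 1 / a ≤ 1 - 1 / b ↔ a ≤ b := by
  rw [sub_le_sub_iff_left, one_div_le_one_div hb ha]

lemma num_den_natCast_div {p q : ℕ} (hpq : p.Coprime q) (hq : 0 < q) :
    ((p : ℚ) / q).num = p ∧ ((p : ℚ) / q).den = q := by
  have hq' : (0 : ℤ) < q := by exact_mod_cast hq
  have hco : (p : ℤ).natAbs.Coprime (q : ℤ).natAbs := by simpa using hpq
  have hnum := Rat.num_div_eq_of_coprime hq' hco
  have hden := Rat.den_div_eq_of_coprime hq' hco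
  push_cast at hnum hden
  exact ⟨hnum, by exact_mod_cast hden⟩

lemma mediant_natCast_div {p q r s : ℕ} (hpq : p.Coprime q) (hrs : r.Coprime s)
    (hq : 0 < q) (hs : 0 < s) :
    mediant (p / q) (r / s) = ((p + r : ℕ) : ℚ) / ((q + s : ℕ) : ℚ) := by
  obtain ⟨h₁, h₂⟩ := num_den_natCast_div hpq hq
  obtain ⟨h₃, h₄⟩ := num_den_natCast_div hrs hs
  rw [mediant, h₁, h₂, h₃, h₄]
  push_cast
  rfl

lemma IsConsecutive.left_unique {S : Set ℚ} {x x' y : ℚ} (h : IsConsecutive S x y)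
    (h' : IsConsecutive S x' y) : x = x' := by
  rcases lt_trichotomy x x' with hlt | heq | hgt
  · exact absurd ⟨hlt, h'.2.2.1⟩ (h.2.2.2 x' h'.1)
  · exact heq
  · exact absurd ⟨hgt, h.2.2.1⟩ (h'.2.2.2 x h.1)

lemma IsConsecutive.right_unique {S : Set ℚ} {x y y' : ℚ} (h : IsConsecutive S x y)
    (h' : IsConsecutive S x y') : y = y' := by
  rcases lt_trichotomy y y' with hlt | heq | hgt
  · exact absurd ⟨h.2.2.1, hlt⟩ (h'.2.2.2 y h.2.1)
  · exact heq
  · exact absurd ⟨h'.2.2.1, hgt⟩ (h.2.2.2 y' h'.2.1)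

def RRCFDigits (b : List ℕ) : Prop := ∀ m ∈ b, 2 ≤ m

section RRCFDigits

variable {b c : List ℕ} {m : ℕ}

@[simp] lemma rrcfDigits_nil : RRCFDigits [] := List.forall_mem_nil _

@[simp] lemma rrcfDigits_cons : RRCFDigits (m :: b) ↔ 2 ≤ m ∧ RRCFDigits b :=
  List.forall_mem_cons

@[simp] lemma rrcfDigits_append : RRCFDigits (b ++ c) ↔ RRCFDigits b ∧ RRCFDigits c :=
  List.forall_mem_append

lemma RRCFDigits.two_le_sum (hb : RRCFDigits b) (hne : b ≠ []) : 2 ≤ b.sum := by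
  obtain ⟨m, t, rfl⟩ := List.exists_cons_of_ne_nil hne
  rw [List.sum_cons]
  have := (rrcfDigits_cons.1 hb).1
  omega

end RRCFDigits

@[simp] lemma rrcfVal_nil : rrcfVal [] = 1 := by
  simp [rrcfVal, rrTail]

lemma rrcfVal_cons (m : ℕ) (t : List ℕ) :
    rrcfVal (m :: t) = 1 - 1 / ((m : ℚ) - 1 + rrcfVal t) := by
  simp only [rrcfVal, rrTail]
  ring

lemma rrcfVal_singleton (m : ℕ) : rrcfVal [m] = 1 - 1 / (m : ℚ) := by
  rw [rrcfVal_cons, rrcfVal_nil, sub_add_cancel]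

/-- The map `G_b`: the value of the expansion `b` followed by a tail of value `v`. -/
def rrcfMap (b : List ℕ) (v : ℚ) : ℚ :=
  b.foldr (fun (m : ℕ) (w : ℚ) => 1 - 1 / ((m : ℚ) - 1 + w)) v

@[simp] lemma rrcfMap_nil (v : ℚ) : rrcfMap [] v = v := rfl

lemma rrcfMap_cons (m : ℕ) (t : List ℕ) (v : ℚ) :
    rrcfMap (m :: t) v = 1 - 1 / ((m : ℚ) - 1 + rrcfMap t v) := rfl

lemma rrcfMap_append (b c : List ℕ) (v : ℚ) :
    rrcfMap (b ++ c) v = rrcfMap b (rrcfMap c v) := by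
  simp only [rrcfMap, List.foldr_append]

lemma rrcfMap_one (b : List ℕ) : rrcfMap b 1 = rrcfVal b := by
  induction b with
  | nil => exact rrcfVal_nil.symm
  | cons m t ih => rw [rrcfMap_cons, ih, rrcfVal_cons]

lemma rrcfVal_append (b c : List ℕ) : rrcfVal (b ++ c) = rrcfMap b (rrcfVal c) := by
  rw [← rrcfMap_one, rrcfMap_append, rrcfMap_one]

section Bounds

variable {b : List ℕ} {v : ℚ}

lemma rrcfMap_nonneg (hb : RRCFDigits b) (hv : 0 ≤ v) : 0 ≤ rrcfMap b v := by
  induction b with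
  | nil => exact hv
  | cons m t ih =>
    obtain ⟨hm, ht⟩ := rrcfDigits_cons.1 hb
    have hm' : (2 : ℚ) ≤ m := by exact_mod_cast hm
    have := ih ht
    rw [rrcfMap_cons, sub_nonneg, div_le_one (by linarith)]
    linarith

lemma rrcfMap_pos (hb : RRCFDigits b) (hv : 0 < v) : 0 < rrcfMap b v := by
  induction b with
  | nil => exact hv
  | cons m t ih =>
    obtain ⟨hm, ht⟩ := rrcfDigits_cons.1 hb
    have hm' : (2 : ℚ) ≤ m := by exact_mod_cast hm
    have := ih ht
    rw [rrcfMap_cons, sub_pos, div_lt_one (by linarith)]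
    linarith

lemma rrcfMap_le_one (hb : RRCFDigits b) (hv₀ : 0 ≤ v) (hv₁ : v ≤ 1) : rrcfMap b v ≤ 1 := by
  cases b with
  | nil => exact hv₁
  | cons m t =>
    obtain ⟨hm, ht⟩ := rrcfDigits_cons.1 hb
    have hm' : (2 : ℚ) ≤ m := by exact_mod_cast hm
    have := rrcfMap_nonneg ht hv₀
    rw [rrcfMap_cons]
    exact sub_le_self _ (div_nonneg zero_le_one (by linarith))

lemma rrcfVal_pos (hb : RRCFDigits b) : 0 < rrcfVal b :=
  rrcfMap_one b ▸ rrcfMap_pos hb one_pos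

lemma rrcfVal_le_one (hb : RRCFDigits b) : rrcfVal b ≤ 1 :=
  rrcfMap_one b ▸ rrcfMap_le_one hb zero_le_one le_rfl

lemma rrcfVal_lt_one (hb : RRCFDigits b) (hne : b ≠ []) : rrcfVal b < 1 := by
  obtain ⟨m, t, rfl⟩ := List.exists_cons_of_ne_nil hne
  obtain ⟨hm, ht⟩ := rrcfDigits_cons.1 hb
  have hm' : (2 : ℚ) ≤ m := by exact_mod_cast hm
  have := rrcfVal_pos ht
  rw [rrcfVal_cons]
  exact sub_lt_self _ (div_pos one_pos (by linarith))

end Bounds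

lemma rrcfMap_strictMonoOn {b : List ℕ} (hb : RRCFDigits b) :
    StrictMonoOn (rrcfMap b) (Ici 0) := by
  induction b with
  | nil => exact strictMono_id.strictMonoOn _
  | cons m t ih =>
    obtain ⟨hm, ht⟩ := rrcfDigits_cons.1 hb
    have hm' : (2 : ℚ) ≤ m := by exact_mod_cast hm
    have hstep : StrictMonoOn (fun w : ℚ => 1 - 1 / ((m : ℚ) - 1 + w)) (Ici 0) :=
      fun u hu w hw huw => by
        have : (0 : ℚ) ≤ u := hu
        rw [one_sub_one_div_lt_one_sub_one_div_iff (by linarith) (by linarith)]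
        linarith
    exact hstep.comp (ih ht) fun w hw => rrcfMap_nonneg ht hw

lemma lt_of_rrcfVal_singleton_lt {m k : ℕ} {d : List ℕ} (hm : 0 < m) (hd : RRCFDigits (k :: d))
    (h : rrcfVal [m] < rrcfVal (k :: d)) : m < k := by
  obtain ⟨hk, hd⟩ := rrcfDigits_cons.1 hd
  have hm' : (0 : ℚ) < m := by exact_mod_cast hm
  have hk' : (2 : ℚ) ≤ k := by exact_mod_cast hk
  have h₀ := rrcfVal_pos hd
  have h₁ := rrcfVal_le_one hd
  rw [rrcfVal_singleton, rrcfVal_cons,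
    one_sub_one_div_lt_one_sub_one_div_iff hm' (by linarith)] at h
  exact_mod_cast (by linarith : (m : ℚ) < k)

lemma prefix_of_rrcfMap_zero_lt {b c : List ℕ} (hb : RRCFDigits b) (hc : RRCFDigits c)
    (h₀ : rrcfMap b 0 < rrcfVal c) (h₁ : rrcfVal c ≤ rrcfVal b) : b <+: c := by
  induction b generalizing c with
  | nil => exact List.nil_prefix
  | cons m t ih =>
    cases c with
    | nil =>
      rw [rrcfVal_nil] at h₁
      exact absurd h₁ (not_le.2 (rrcfVal_lt_one hb (List.cons_ne_nil _ _)))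
    | cons k s =>
      obtain ⟨hm, ht⟩ := rrcfDigits_cons.1 hb
      obtain ⟨hk, hs⟩ := rrcfDigits_cons.1 hc
      have hm' : (2 : ℚ) ≤ m := by exact_mod_cast hm
      have hk' : (2 : ℚ) ≤ k := by exact_mod_cast hk
      have ht₀ := rrcfMap_nonneg ht le_rfl
      have ht₁ := rrcfVal_pos ht
      have ht₂ := rrcfVal_le_one ht
      have hs₀ := rrcfVal_pos hs
      have hs₁ := rrcfVal_le_one hs
      rw [rrcfMap_cons, rrcfVal_cons,
        one_sub_one_div_lt_one_sub_one_div_iff (by linarith) (by linarith)] at h₀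
      rw [rrcfVal_cons, rrcfVal_cons,
        one_sub_one_div_le_one_sub_one_div_iff (by linarith) (by linarith)] at h₁
      -- `k - 1 + [[1; s]]` lies in `(k - 1, k]` and in `(m - 1, m]`.
      obtain rfl : k = m := by
        have : m < k + 1 := by exact_mod_cast (by linarith : (m : ℚ) < k + 1)
        have : k < m + 1 := by exact_mod_cast (by linarith : (k : ℚ) < m + 1)
        omega
      exact List.cons_prefix_cons.2 ⟨rfl, ih ht hs (by linarith) (by linarith)⟩

/-- Stripping the trailing `2`s of `b` and decrementing its new last digit gives `rrcfMap b 0`. -/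
lemma rrcfMap_zero_eq_zero_or {b : List ℕ} (hb : RRCFDigits b) :
    rrcfMap b 0 = 0 ∨ ∃ c, RRCFDigits c ∧ c.sum < b.sum ∧ rrcfVal c = rrcfMap b 0 := by
  induction b with
  | nil => exact Or.inl rfl
  | cons m t ih =>
    obtain ⟨hm, ht⟩ := rrcfDigits_cons.1 hb
    obtain ⟨j, rfl⟩ : ∃ j, m = j + 2 := ⟨m - 2, by omega⟩
    rcases ih ht with h | ⟨c, hc, hsum, hval⟩
    · rw [rrcfMap_cons, h]
      rcases j with _ | i
      · left
        norm_num
      · refine Or.inr ⟨[i + 2], by simp, by simp; omega, ?_⟩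
        rw [rrcfVal_singleton]
        push_cast
        ring_nf
    · refine Or.inr ⟨(j + 2) :: c, by simp [hc], by simp; omega, ?_⟩
      rw [rrcfVal_cons, rrcfMap_cons, hval]

/-- The numerator and denominator of `rrcfMap b (p / q)`. -/
def continuant (b : List ℕ) (pq : ℕ × ℕ) : ℕ × ℕ :=
  b.foldr (fun m pq => (pq.1 + (m - 2) * pq.2, pq.1 + (m - 1) * pq.2)) pq

section Continuant

variable {b : List ℕ}

lemma continuant_cons (m : ℕ) (t : List ℕ) (pq : ℕ × ℕ) :
    continuant (m :: t) pq =
      ((continuant t pq).1 + (m - 2) * (continuant t pq).2,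
        (continuant t pq).1 + (m - 1) * (continuant t pq).2) := rfl

lemma continuant_add (b : List ℕ) (pq rs : ℕ × ℕ) :
    continuant b (pq + rs) = continuant b pq + continuant b rs := by
  induction b with
  | nil => rfl
  | cons m t ih =>
    simp only [continuant_cons, ih, Prod.fst_add, Prod.snd_add, Prod.mk_add_mk]
    congr 1 <;> ring

lemma continuant_snd_pos (hb : RRCFDigits b) {pq : ℕ × ℕ} (hq : 0 < pq.2) :
    0 < (continuant b pq).2 := by
  induction b with
  | nil => exact hq
  | cons m t ih =>
    obtain ⟨hm, ht⟩ := rrcfDigits_cons.1 hb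
    rw [continuant_cons]
    exact Nat.add_pos_right _ (Nat.mul_pos (by omega) (ih ht))

lemma continuant_coprime (hb : RRCFDigits b) {pq : ℕ × ℕ} (h : pq.1.Coprime pq.2) :
    (continuant b pq).1.Coprime (continuant b pq).2 := by
  induction b with
  | nil => exact h
  | cons m t ih =>
    obtain ⟨hm, ht⟩ := rrcfDigits_cons.1 hb
    obtain ⟨j, rfl⟩ : ∃ j, m = j + 2 := ⟨m - 2, by omega⟩
    rw [continuant_cons, show j + 2 - 2 = j by omega, show j + 2 - 1 = j + 1 by omega]
    set P := (continuant t pq).1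
    set Q := (continuant t pq).2
    -- the matrix `[[1, j], [1, j + 1]]` has determinant one
    rw [show P + (j + 1) * Q = P + j * Q + Q by ring, Nat.coprime_self_add_right,
      Nat.coprime_add_mul_right_left]
    exact ih ht

lemma rrcfMap_natCast_div (hb : RRCFDigits b) {p q : ℕ} (hq : 0 < q) :
    rrcfMap b (p / q) = (continuant b (p, q)).1 / (continuant b (p, q)).2 := by
  induction b with
  | nil => rfl
  | cons m t ih =>
    obtain ⟨hm, ht⟩ := rrcfDigits_cons.1 hb
    obtain ⟨j, rfl⟩ : ∃ j, m = j + 2 := ⟨m - 2, by omega⟩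
    have hQ : (0 : ℚ) < (continuant t (p, q)).2 := by exact_mod_cast continuant_snd_pos ht hq
    rw [rrcfMap_cons, ih ht, continuant_cons, show j + 2 - 2 = j by omega,
      show j + 2 - 1 = j + 1 by omega]
    set P := (continuant t (p, q)).1
    set Q := (continuant t (p, q)).2
    have hP : (0 : ℚ) ≤ P := P.cast_nonneg
    have hden : ((j + 2 : ℕ) : ℚ) - 1 + P / Q = ((j + 1) * Q + P) / Q := by
      push_cast
      field_simp
      ring
    rw [hden, one_div_div, one_sub_div (by positivity)]
    push_cast
    ring

lemma mediant_rrcfMap (hb : RRCFDigits b) {p q r s : ℕ} (hpq : p.Coprime q) (hrs : r.Coprime s)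
    (hq : 0 < q) (hs : 0 < s) :
    mediant (rrcfMap b (p / q)) (rrcfMap b (r / s)) =
      rrcfMap b (((p + r : ℕ) : ℚ) / ((q + s : ℕ) : ℚ)) := by
  rw [rrcfMap_natCast_div hb hq, rrcfMap_natCast_div hb hs, rrcfMap_natCast_div hb (by omega),
    mediant_natCast_div (continuant_coprime hb hpq) (continuant_coprime hb hrs)
      (continuant_snd_pos hb hq) (continuant_snd_pos hb hs), ← Prod.mk_add_mk, continuant_add]
  rfl

lemma mediant_rrcfMap_rrcfVal_singleton (hb : RRCFDigits b) (k : ℕ) :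
    mediant (rrcfMap b (rrcfVal [k + 1])) (rrcfVal b) = rrcfVal (b ++ [k + 2]) := by
  have h := mediant_rrcfMap hb (Nat.coprime_self_add_right.2 (Nat.coprime_one_right k))
    (Nat.coprime_one_left 1) k.succ_pos one_pos
  rw [rrcfVal_append, rrcfVal_singleton, rrcfVal_singleton, ← rrcfMap_one]
  convert h using 3 <;> push_cast <;> field_simp <;> ring

lemma mediant_rrcfMap_zero (hb : RRCFDigits b) :
    mediant (rrcfMap b 0) (rrcfVal b) = rrcfVal (b ++ [2]) := by
  simpa [rrcfVal_singleton] using mediant_rrcfMap_rrcfVal_singleton hb 0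

end Continuant

lemma rrcfVal_mem_Theta {c : List ℕ} {k : ℕ} (hc : RRCFDigits c) (hne : c ≠ [])
    (hsum : c.sum = k + 1) : rrcfVal c ∈ Theta k :=
  ⟨⟨rrcfVal_pos hc, rrcfVal_lt_one hc hne⟩, c, ⟨hc, rfl⟩, hsum⟩

lemma mem_Xi_iff {n : ℕ} {w : ℚ} :
    w ∈ Xi n ↔ w = 0 ∨ ∃ c, RRCFDigits c ∧ c.sum ≤ n + 1 ∧ rrcfVal c = w := by
  simp only [Xi, mem_union, mem_insert_iff, mem_singleton_iff, mem_iUnion, Finset.mem_Icc,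
    exists_prop]
  constructor
  · rintro ((rfl | rfl) | ⟨k, ⟨-, hkn⟩, -, c, ⟨hc, rfl⟩, hsum⟩)
    · exact Or.inl rfl
    · exact Or.inr ⟨[], rrcfDigits_nil, by simp, rrcfVal_nil⟩
    · exact Or.inr ⟨c, hc, by omega, rfl⟩
  · rintro (rfl | ⟨c, hc, hsum, rfl⟩)
    · exact Or.inl (Or.inl rfl)
    · rcases eq_or_ne c [] with rfl | hne
      · exact Or.inl (Or.inr rrcfVal_nil)
      · have := hc.two_le_sum hne
        exact Or.inr ⟨c.sum - 1, ⟨by omega, by omega⟩, rrcfVal_mem_Theta hc hne (by omega)⟩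

section Neighbours

variable {n : ℕ} {b : List ℕ}

lemma rrcfMap_zero_mem_Xi (hb : RRCFDigits b) (hsum : b.sum ≤ n + 1) : rrcfMap b 0 ∈ Xi n := by
  rcases rrcfMap_zero_eq_zero_or hb with h | ⟨c, hc, hlt, h⟩
  · exact mem_Xi_iff.2 (Or.inl h)
  · exact mem_Xi_iff.2 (Or.inr ⟨c, hc, by omega, h⟩)

lemma isConsecutive_rrcfMap_zero (hb : RRCFDigits b) (hsum : b.sum = n + 1) :
    IsConsecutive (Xi n) (rrcfMap b 0) (rrcfVal b) := by
  have hlt : rrcfMap b 0 < rrcfVal b := by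
    rw [← rrcfMap_one]
    exact rrcfMap_strictMonoOn hb self_mem_Ici (mem_Ici.2 zero_le_one) zero_lt_one
  refine ⟨rrcfMap_zero_mem_Xi hb hsum.le, mem_Xi_iff.2 (Or.inr ⟨b, hb, hsum.le, rfl⟩), hlt, ?_⟩
  rintro w hw ⟨h₀, h₁⟩
  rcases mem_Xi_iff.1 hw with rfl | ⟨c, hc, hcsum, rfl⟩
  · exact h₀.not_ge (rrcfMap_nonneg hb le_rfl)
  · obtain ⟨d, rfl⟩ := prefix_of_rrcfMap_zero_lt hb hc h₀ h₁.le
    have hd : d ≠ [] := by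
      rintro rfl
      simp at h₁
    have := (rrcfDigits_append.1 hc).2.two_le_sum hd
    rw [List.sum_append] at hcsum
    omega

lemma isConsecutive_rrcfVal_append_singleton {m : ℕ} (hb : RRCFDigits (b ++ [m]))
    (hsum : (b ++ [m]).sum = n + 1) : IsConsecutive (Xi n) (rrcfVal (b ++ [m])) (rrcfVal b) := by
  obtain ⟨hb', hm⟩ := rrcfDigits_append.1 hb
  have hmono := rrcfMap_strictMonoOn hb'
  have hm₀ : 0 < rrcfVal [m] := rrcfVal_pos hm
  have hm₁ : rrcfVal [m] < 1 := rrcfVal_lt_one hm (List.cons_ne_nil _ _)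
  have hsum' : b.sum + m = n + 1 := by rwa [List.sum_append, List.sum_singleton] at hsum
  refine ⟨mem_Xi_iff.2 (Or.inr ⟨_, hb, hsum.le, rfl⟩),
    mem_Xi_iff.2 (Or.inr ⟨b, hb', by omega, rfl⟩), ?_, ?_⟩
  · rw [rrcfVal_append, ← rrcfMap_one b]
    exact hmono hm₀.le (mem_Ici.2 zero_le_one) hm₁
  rintro w hw ⟨h₀, h₁⟩
  rcases mem_Xi_iff.1 hw with rfl | ⟨c, hc, hcsum, rfl⟩
  · exact h₀.not_gt (rrcfVal_pos hb)
  rw [rrcfVal_append] at h₀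
  obtain ⟨d, rfl⟩ := prefix_of_rrcfMap_zero_lt hb' hc ((hmono self_mem_Ici hm₀.le hm₀).trans h₀) h₁.le
  obtain ⟨-, hd⟩ := rrcfDigits_append.1 hc
  rw [rrcfVal_append, hmono.lt_iff_lt hm₀.le (rrcfVal_pos hd).le] at h₀
  rw [rrcfVal_append, ← rrcfMap_one b, hmono.lt_iff_lt (rrcfVal_pos hd).le (mem_Ici.2 zero_le_one)] at h₁
  have hdne : d ≠ [] := by
    rintro rfl
    simp at h₁
  obtain ⟨k, d, rfl⟩ := List.exists_cons_of_ne_nil hdne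
  have := lt_of_rrcfVal_singleton_lt (by simp at hm; omega) hd h₀
  simp only [List.sum_append, List.sum_cons] at hcsum
  omega

end Neighbours

/-- if `x < y < z` are consecutive in `Ξ_n` with `y ∈ Θ_n`, then
`y^l = x ⊕ y ∈ Θ_{n+2}` and `y^r = y ⊕ z ∈ Θ_{n+1}`. -/
theorem mediant_mem_Theta
    (n : ℕ) (x y z : ℚ)
    (hxy : IsConsecutive (Xi n) x y) (hyz : IsConsecutive (Xi n) y z)
    (hy : y ∈ Theta n) :
    mediant x y ∈ Theta (n + 2) ∧ mediant y z ∈ Theta (n + 1) := by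
  obtain ⟨hy₀₁, b, ⟨hb, rfl⟩, hsum⟩ := hy
  have hne : b ≠ [] := by
    rintro rfl
    simp at hy₀₁
  obtain ⟨b', m, rfl⟩ : ∃ b' m, b = b' ++ [m] :=
    ⟨_, _, (List.dropLast_append_getLast hne).symm⟩
  obtain rfl := hxy.left_unique (isConsecutive_rrcfMap_zero hb hsum)
  obtain rfl := hyz.right_unique (isConsecutive_rrcfVal_append_singleton hb hsum)
  obtain ⟨hb', hm⟩ := rrcfDigits_append.1 hb
  obtain ⟨k, rfl⟩ : ∃ k, m = k + 1 := ⟨m - 1, by simp at hm; omega⟩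
  simp only [List.sum_append, List.sum_singleton] at hsum
  constructor
  · rw [mediant_rrcfMap_zero hb]
    exact rrcfVal_mem_Theta (by simp_all) (by simp) (by simp; omega)
  · rw [rrcfVal_append b', mediant_rrcfMap_rrcfVal_singleton hb' k]
    exact rrcfVal_mem_Theta (by simp_all) (by simp) (by simp; omega)
end
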